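/- arXiv:2304.07451 — 2 statements merged into one kernel-verified Lean document; each statement's English description precedes it below -/
import Mathlib

section
/- Let ρ > 0, γ ≥ 0 and let f, f*, c, c*, d₀, d, d*, v₀, v, v*, t, t* ∈ ℝ^q satisfy: f + ρ(c − d₀ + v₀) = 0; γ t − ρ(c − d + v₀) = 0; v = v₀ + c − d; f* + ρ(c* − d* + v*) = 0; γ t* − ρ(c* − d* + v*) = 0; and c* = d*. Then (ρ/2)(‖v₀ − v*‖₂² − ‖v − v*‖₂²) + (ρ/2)(‖d₀ − d*‖₂² − ‖d − d*‖₂²) = (f − f*)ᵀ(c − c*) + γ (t − t*)ᵀ(d − d*) + (ρ/2)‖(c − c*) − (d₀ − d*)‖₂². -/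
open scoped RealInnerProductSpace

/-!
Write `Δx = x − x*`. The optimality conditions express both sides through the
increments alone: `f − f* = −ρ (Δc − Δd₀ + Δv₀)`, `γ (t − t*) = ρ Δv` and
`Δv = Δv₀ + Δc − Δd` (all because `c* = d*`). What is left is a polynomial identity
in the inner products of `Δv₀, Δd₀, Δc, Δd`.
-/

theorem energy_identity_of_increments {E : Type*} [NormedAddCommGroup E]
    [InnerProductSpace ℝ E] (ρ : ℝ) (a b x y : E) :
    ρ / 2 * (‖a‖ ^ 2 - ‖a + x - y‖ ^ 2) + ρ / 2 * (‖b‖ ^ 2 - ‖y‖ ^ 2) =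
      -ρ * ⟪x - b + a, x⟫ + ρ * ⟪a + x - y, y⟫ + ρ / 2 * ‖x - b‖ ^ 2 := by
  simp only [← real_inner_self_eq_norm_sq, inner_add_left, inner_sub_left,
    inner_add_right, inner_sub_right]
  rw [real_inner_comm a x, real_inner_comm a y, real_inner_comm b x, real_inner_comm x y]
  ring

theorem admm_lasso_energy_identity_general {q : ℕ} (ρ γ : ℝ)
    (f fs c cs d₀ d ds v₀ v vs t ts : EuclideanSpace ℝ (Fin q))
    (h1 : f + ρ • (c - d₀ + v₀) = 0)
    (h2 : γ • t - ρ • (c - d + v₀) = 0)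
    (h3 : v = v₀ + c - d)
    (h4 : fs + ρ • (cs - ds + vs) = 0)
    (h5 : γ • ts - ρ • (cs - ds + vs) = 0)
    (h6 : cs = ds) :
    ρ / 2 * (‖v₀ - vs‖ ^ 2 - ‖v - vs‖ ^ 2) + ρ / 2 * (‖d₀ - ds‖ ^ 2 - ‖d - ds‖ ^ 2) =
      ⟪f - fs, c - cs⟫ + γ * ⟪t - ts, d - ds⟫ +
        ρ / 2 * ‖(c - cs) - (d₀ - ds)‖ ^ 2 := by
  subst h6 h3
  have hv : v₀ + c - d - vs = (v₀ - vs) + (c - cs) - (d - cs) := by abel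
  have hf : f - fs = -ρ • ((c - cs) - (d₀ - cs) + (v₀ - vs)) := by
    rw [eq_neg_of_add_eq_zero_left h1, eq_neg_of_add_eq_zero_left h4]
    module
  have ht : γ • (t - ts) = ρ • ((v₀ - vs) + (c - cs) - (d - cs)) := by
    rw [smul_sub, sub_eq_zero.mp h2, sub_eq_zero.mp h5]
    module
  rw [hv, hf, ← real_inner_smul_left, ht, real_inner_smul_left, real_inner_smul_left]
  exact energy_identity_of_increments ρ (v₀ - vs) (d₀ - cs) (c - cs) (d - cs)

/-- One-step energy identity (eq. (S.7) of the supplementary material) for the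
lasso block of the ADMM algorithm: under the optimality conditions of one ADMM
iteration and the fixed-point conditions of a solution,
`(ρ/2)(‖v₀ − v*‖² − ‖v − v*‖²) + (ρ/2)(‖d₀ − d*‖² − ‖d − d*‖²)
  = (f − f*)ᵀ(c − c*) + γ(t − t*)ᵀ(d − d*) + (ρ/2)‖(c − c*) − (d₀ − d*)‖²`. -/
theorem admm_lasso_energy_identity {q : ℕ} (ρ γ : ℝ) (hρ : 0 < ρ) (hγ : 0 ≤ γ)
    (f fs c cs d₀ d ds v₀ v vs t ts : EuclideanSpace ℝ (Fin q))
    (h1 : f + ρ • (c - d₀ + v₀) = 0)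
    (h2 : γ • t - ρ • (c - d + v₀) = 0)
    (h3 : v = v₀ + c - d)
    (h4 : fs + ρ • (cs - ds + vs) = 0)
    (h5 : γ • ts - ρ • (cs - ds + vs) = 0)
    (h6 : cs = ds) :
    ρ / 2 * (‖v₀ - vs‖ ^ 2 - ‖v - vs‖ ^ 2) + ρ / 2 * (‖d₀ - ds‖ ^ 2 - ‖d - ds‖ ^ 2) =
      ⟪f - fs, c - cs⟫ + γ * ⟪t - ts, d - ds⟫ +
        ρ / 2 * ‖(c - cs) - (d₀ - ds)‖ ^ 2 :=
  admm_lasso_energy_identity_general ρ γ f fs c cs d₀ d ds v₀ v vs t ts h1 h2 h3 h4 h5 h6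
end

section
/- Let ρ > 0, λ ≥ 0 and let h, h*, β, β*, η₀, η, η*, u₀, u, u*, s, s* ∈ ℝ^M satisfy: h − ρ(η₀ − β + u₀) = 0; λ s + ρ(η − β + u₀) = 0; u = u₀ + η − β; h* − ρ(η* − β* + u*) = 0; λ s* + ρ(η* − β* + u*) = 0; and β* = η*. Then (ρ/2)(‖u₀ − u*‖₂² − ‖u − u*‖₂²) + (ρ/2)(‖η₀ − η*‖₂² − ‖η − η*‖₂²) = (h − h*)ᵀ(β − β*) + λ (s − s*)ᵀ(η − η*) + (ρ/2)‖(β − β*) − (η₀ − η*)‖₂². -/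
/-!
With `a = u₀ - u*`, `b = η₀ - η*`, `c = β - β*`, `d = η - η*`, the optimality conditions give
`h - h* = ρ (a + b - c)` and `λ (s - s*) = -ρ (u - u*) = -ρ (a + d - c)`, so the claim is `ρ / 2`
times an identity between four arbitrary vectors, checked by expanding the inner products.
-/

open scoped RealInnerProductSpace

theorem norm_sq_sub_norm_sq_add_sub_add {E : Type*} [NormedAddCommGroup E]
    [InnerProductSpace ℝ E] (a b c d : E) :
    ‖a‖ ^ 2 - ‖a + d - c‖ ^ 2 + (‖b‖ ^ 2 - ‖d‖ ^ 2) =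
      2 * ⟪a + b - c, c⟫ - 2 * ⟪a + d - c, d⟫ + ‖c - b‖ ^ 2 := by
  simp only [← real_inner_self_eq_norm_sq, inner_add_left, inner_add_right, inner_sub_left,
    inner_sub_right]
  rw [real_inner_comm a c, real_inner_comm a d, real_inner_comm b c, real_inner_comm c d]
  ring

theorem admm_grouplasso_energy_identity_general {M : ℕ} (ρ lam : ℝ)
    (h hs β βs η₀ η ηs u₀ u us s ss : EuclideanSpace ℝ (Fin M))
    (h1 : h - ρ • (η₀ - β + u₀) = 0)
    (h2 : lam • s + ρ • (η - β + u₀) = 0)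
    (h3 : u = u₀ + η - β)
    (h4 : hs - ρ • (ηs - βs + us) = 0)
    (h5 : lam • ss + ρ • (ηs - βs + us) = 0)
    (h6 : βs = ηs) :
    ρ / 2 * (‖u₀ - us‖ ^ 2 - ‖u - us‖ ^ 2) + ρ / 2 * (‖η₀ - ηs‖ ^ 2 - ‖η - ηs‖ ^ 2) =
      ⟪h - hs, β - βs⟫ + lam * ⟪s - ss, η - ηs⟫ +
        ρ / 2 * ‖(β - βs) - (η₀ - ηs)‖ ^ 2 := by
  have hu : u - us = (u₀ - us) + (η - ηs) - (β - βs) := by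
    linear_combination (norm := module) h3 - h6
  have hh : h - hs = ρ • ((u₀ - us) + (η₀ - ηs) - (β - βs)) := by
    linear_combination (norm := module) h1 - h4
  have hss : lam • (s - ss) = -(ρ • (u - us)) := by
    linear_combination (norm := module) h2 - h5 + ρ • h3 - ρ • h6
  rw [← real_inner_smul_left, hss, hh, inner_neg_left, real_inner_smul_left,
    real_inner_smul_left, hu]
  linear_combination (ρ / 2) *
    norm_sq_sub_norm_sq_add_sub_add (u₀ - us) (η₀ - ηs) (β - βs) (η - ηs)

/-- One-step energy identity for the group-lasso block of the ADMM algorithm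
(the analogue of eq. (S.7) of the supplementary material): under the optimality
conditions of one ADMM iteration and the fixed-point conditions of a solution,
`(ρ/2)(‖u₀ − u*‖² − ‖u − u*‖²) + (ρ/2)(‖η₀ − η*‖² − ‖η − η*‖²)
  = (h − h*)ᵀ(β − β*) + λ(s − s*)ᵀ(η − η*) + (ρ/2)‖(β − β*) − (η₀ − η*)‖²`. -/
theorem admm_grouplasso_energy_identity {M : ℕ} (ρ lam : ℝ) (hρ : 0 < ρ) (hlam : 0 ≤ lam)
    (h hs β βs η₀ η ηs u₀ u us s ss : EuclideanSpace ℝ (Fin M))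
    (h1 : h - ρ • (η₀ - β + u₀) = 0)
    (h2 : lam • s + ρ • (η - β + u₀) = 0)
    (h3 : u = u₀ + η - β)
    (h4 : hs - ρ • (ηs - βs + us) = 0)
    (h5 : lam • ss + ρ • (ηs - βs + us) = 0)
    (h6 : βs = ηs) :
    ρ / 2 * (‖u₀ - us‖ ^ 2 - ‖u - us‖ ^ 2) + ρ / 2 * (‖η₀ - ηs‖ ^ 2 - ‖η - ηs‖ ^ 2) =
      ⟪h - hs, β - βs⟫ + lam * ⟪s - ss, η - ηs⟫ +
        ρ / 2 * ‖(β - βs) - (η₀ - ηs)‖ ^ 2 :=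
  admm_grouplasso_energy_identity_general ρ lam h hs β βs η₀ η ηs u₀ u us s ss h1 h2 h3 h4 h5 h6
end
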